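/- Let O be a discrete valuation ring with maximal ideal m, fraction field F, and residue field k = O/m. Let V_F be a finite-dimensional F-vector space, G a group, and ρ_F : G → Aut_F(V_F) an F-linear representation. Let T ⊆ V_F be a G-stable O-lattice, i.e., a finitely generated O-submodule with F·T = V_F and ρ_F(σ)(T) = T for all σ ∈ G. If the k-vector space T/mT, with the induced G-action, is a very simple G-module over k, then V_F is a very simple G-module over F. -/

import Mathlib

/-- A representation `ρ : G → Aut_F(V)` is *very simple* if every `F`-subalgebra
`R ⊆ End_F(V)` (containing `Id`) that is stable under conjugation by all `ρ(σ)`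
is either `F·Id` or all of `End_F(V)`. -/
def VerySimple {F G V : Type*} [Field F] [Group G]
    [AddCommGroup V] [Module F V] (ρ : Representation F G V) : Prop :=
  ∀ R : Subalgebra F (Module.End F V),
    (∀ σ : G, ∀ r ∈ R, ρ σ * r * ρ σ⁻¹ ∈ R) → R = ⊥ ∨ R = ⊤

attribute [local instance] Ideal.Quotient.field

open Submodule Pointwise

section Aux
variable {O : Type*} [CommRing O] [IsDomain O] [IsDiscreteValuationRing O]
    {F : Type*} [Field F] [Algebra O F] [IsFractionRing O F]
    {V : Type*} [AddCommGroup V] [Module F V]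
    [Module O V] [IsScalarTower O F V]

lemma aux_clear_denom (T : Submodule O V) (hspan : Submodule.span F (T : Set V) = ⊤)
    (v : V) : ∃ c : O, c ≠ 0 ∧ c • v ∈ T := by
  have hv : v ∈ Submodule.span F (T : Set V) := hspan ▸ Submodule.mem_top
  induction hv using Submodule.span_induction with
  | mem x hx => exact ⟨1, one_ne_zero, by simpa using hx⟩
  | zero => exact ⟨1, one_ne_zero, by simp⟩
  | add x y _ _ hx hy =>
      obtain ⟨a, ha, hav⟩ := hx; obtain ⟨b, hb, hbv⟩ := hy
      refine ⟨a * b, mul_ne_zero ha hb, ?_⟩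
      rw [smul_add]
      exact add_mem (by rw [mul_comm, mul_smul]; exact T.smul_mem b hav)
        (by rw [mul_smul]; exact T.smul_mem a hbv)
  | smul c x _ ih =>
      obtain ⟨a, ha, hav⟩ := ih
      obtain ⟨⟨n, d⟩, hnd⟩ := IsLocalization.surj (nonZeroDivisors O) c
      refine ⟨(d : O) * a, mul_ne_zero (nonZeroDivisors.ne_zero d.2) ha, ?_⟩
      have key : ((d : O) * a) • (c • x) = n • (a • x) := by
        rw [mul_smul, smul_comm (d : O) a, smul_comm n a]
        congr 1
        rw [← algebraMap_smul F (d : O) (c • x), ← algebraMap_smul F n x,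
          smul_smul, mul_comm, hnd]
      rw [key]
      exact T.smul_mem n hav
end Aux

lemma reduceEnd_le {O M : Type*} [CommRing O] [AddCommGroup M] [Module O M] (I : Ideal O)
    (g : M →ₗ[O] M) : (I • ⊤ : Submodule O M) ≤ Submodule.comap g (I • ⊤) := by
  rw [← Submodule.map_le_iff_le_comap, Submodule.map_smul'']
  exact smul_mono_right I le_top

/-- Reduction of an `O`-linear endomorphism modulo an ideal `I`. -/
def reduceEnd {O M : Type*} [CommRing O] [AddCommGroup M] [Module O M] (I : Ideal O)
    (g : M →ₗ[O] M) : Module.End (O ⧸ I) (M ⧸ (I • ⊤ : Submodule O M)) where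
  toFun := Submodule.mapQ _ _ g (reduceEnd_le I g)
  map_add' := map_add _
  map_smul' := by
    intro c x
    obtain ⟨lam, rfl⟩ := Ideal.Quotient.mk_surjective c
    obtain ⟨t, rfl⟩ := Submodule.Quotient.mk_surjective _ x
    show ((I • ⊤ : Submodule O M).mapQ (I • ⊤) g (reduceEnd_le I g))
        ((Ideal.Quotient.mk I) lam • Submodule.Quotient.mk t) = _
    rw [Module.Quotient.mk_smul_mk, Submodule.mapQ_apply, map_smul]
    rfl

lemma reduceEnd_mk {O M : Type*} [CommRing O] [AddCommGroup M] [Module O M] (I : Ideal O)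
    (g : M →ₗ[O] M) (t : M) :
    reduceEnd I g (Submodule.Quotient.mk t) = Submodule.Quotient.mk (g t) := rfl

set_option maxHeartbeats 1600000 in
set_option synthInstance.maxHeartbeats 400000 in
/-- Let `O` be a discrete valuation ring with maximal ideal `m`, fraction field `F`
and residue field `k = O/m`.  Let `V` be a finite-dimensional `F`-vector space,
`ρ : G → Aut_F(V)` a representation, and `T ⊆ V` a `G`-stable `O`-lattice.
If the `k[G]`-module `T/mT` is very simple, then the `G`-module `V` is very simple. -/
theorem very_simple_of_reduction_very_simple
    {O : Type*} [CommRing O] [IsDomain O] [IsDiscreteValuationRing O]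
    {F : Type*} [Field F] [Algebra O F] [IsFractionRing O F]
    {G V : Type*} [Group G] [AddCommGroup V] [Module F V] [FiniteDimensional F V]
    [Module O V] [IsScalarTower O F V]
    (ρ : Representation F G V)
    (T : Submodule O V) (hfg : T.FG)
    (hspan : Submodule.span F (T : Set V) = ⊤)
    (hstab : ∀ σ : G, T.map ((ρ σ).restrictScalars O) = T)
    (ρk : Representation (O ⧸ IsLocalRing.maximalIdeal O) G
      (T ⧸ (IsLocalRing.maximalIdeal O • ⊤ : Submodule O T)))
    (hcompat : ∀ (σ : G) (t : T),
      ρk σ (Submodule.Quotient.mk t) =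
        Submodule.Quotient.mk
          (⟨ρ σ (t : V), by
              have h1 := Submodule.mem_map_of_mem
                (f := (ρ σ).restrictScalars O) t.2
              rw [hstab σ] at h1
              exact h1⟩ : T))
    (h : VerySimple ρk) :
    VerySimple ρ := by
  classical
  intro R hR
  let m := IsLocalRing.maximalIdeal O
  have hm : m = IsLocalRing.maximalIdeal O := rfl
  obtain ⟨π, hπ⟩ := IsDiscreteValuationRing.exists_irreducible O
  have hπm : m = Ideal.span {π} := (IsDiscreteValuationRing.irreducible_iff_uniformizer π).mp hπ
  have hπ0 : π ≠ 0 := hπ.ne_zero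
  have hπmem : π ∈ m := hπm ▸ Ideal.mem_span_singleton_self π
  have hπF : algebraMap O F π ≠ 0 :=
    (map_ne_zero_iff _ (IsFractionRing.injective O F)).mpr hπ0
  -- the lattice of integral endomorphisms
  let ET : Submodule O (Module.End F V) :=
    { carrier := {f | ∀ t ∈ T, f t ∈ T}
      add_mem' := fun hf hg t ht => by
        rw [LinearMap.add_apply]; exact T.add_mem (hf t ht) (hg t ht)
      zero_mem' := fun t ht => by simp
      smul_mem' := fun c f hf t ht => by
        rw [LinearMap.smul_apply]; exact T.smul_mem c (hf t ht) }
  have memET : ∀ {f : Module.End F V}, f ∈ ET ↔ ∀ t ∈ T, f t ∈ T := Iff.rfl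
  -- restriction to T
  have resmem : ∀ (f : Module.End F V), f ∈ ET → ∀ x ∈ T, (f.restrictScalars O) x ∈ T :=
    fun f hf => hf
  let res : ∀ f : Module.End F V, f ∈ ET → (T →ₗ[O] T) := fun f hf =>
    (f.restrictScalars O).restrict (resmem f hf)
  have res_apply : ∀ (f : Module.End F V) (hf : f ∈ ET) (t : T),
      ((res f hf t : T) : V) = f t := fun f hf t => rfl
  -- membership translations for m•T
  have hmap : (m • T : Submodule O V) = Submodule.map T.subtype (m • ⊤ : Submodule O T) := by
    rw [Submodule.map_smul'', Submodule.map_top, Submodule.range_subtype]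
  have mem_mT : ∀ x : T, x ∈ (m • ⊤ : Submodule O T) ↔ (x : V) ∈ m • T := by
    intro x
    constructor
    · intro hx
      rw [hmap]
      exact Submodule.mem_map_of_mem hx
    · intro hx
      rw [hmap] at hx
      obtain ⟨y, hy, hyx⟩ := hx
      rwa [show y = x from Subtype.ext hyx] at hy
  have mem_mT' : ∀ v ∈ (m • T : Submodule O V), ∃ t ∈ T, π • t = v := by
    intro v hv
    rw [hπm, Submodule.ideal_span_singleton_smul] at hv
    exact hv
  -- reduction
  let red : ∀ f : Module.End F V, f ∈ ET →
      Module.End (O ⧸ m) (T ⧸ (m • ⊤ : Submodule O T)) := fun f hf =>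
    reduceEnd m (res f hf)
  have red_mk : ∀ (f : Module.End F V) (hf : f ∈ ET) (t : T),
      red f hf (Submodule.Quotient.mk t) = Submodule.Quotient.mk (res f hf t) :=
    fun f hf t => rfl
  have ebar : ∀ (φ ψ : Module.End (O ⧸ m) (T ⧸ (m • ⊤ : Submodule O T))),
      (∀ t : T, φ (Submodule.Quotient.mk t) = ψ (Submodule.Quotient.mk t)) → φ = ψ := by
    intro φ ψ hh
    apply LinearMap.ext
    intro x
    obtain ⟨t, rfl⟩ := Submodule.Quotient.mk_surjective _ x
    exact hh t
  have mk_eq : ∀ (x y : T), (x : V) = (y : V) →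
      (Submodule.Quotient.mk x : T ⧸ (m • ⊤ : Submodule O T)) = Submodule.Quotient.mk y :=
    fun x y hxy => congrArg _ (Subtype.ext hxy)
  -- the reduction of R
  let Rbar : Subalgebra (O ⧸ m)
      (Module.End (O ⧸ m) (T ⧸ (m • ⊤ : Submodule O T))) :=
    { carrier := {φ | ∃ f : Module.End F V, ∃ hf : f ∈ ET, f ∈ R ∧ red f hf = φ}
      mul_mem' := by
        rintro φ ψ ⟨f, hf, hfR, rfl⟩ ⟨g, hg, hgR, rfl⟩
        have hfgET : f * g ∈ ET := fun t ht => by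
          rw [Module.End.mul_apply]; exact hf _ (hg t ht)
        refine ⟨f * g, hfgET, mul_mem hfR hgR, ebar _ _ fun t => ?_⟩
        show Submodule.Quotient.mk (res (f * g) hfgET t)
          = Submodule.Quotient.mk (res f hf (res g hg t))
        exact mk_eq _ _ (by
          rw [res_apply (f * g) hfgET t, res_apply f hf (res g hg t), res_apply g hg t]; rfl)
      one_mem' := by
        have h1 : (1 : Module.End F V) ∈ ET := fun t ht => by simpa using ht
        refine ⟨1, h1, one_mem R, ebar _ _ fun t => ?_⟩
        show Submodule.Quotient.mk (res 1 h1 t) = Submodule.Quotient.mk t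
        exact mk_eq _ _ (by rw [res_apply 1 h1 t]; rfl)
      add_mem' := by
        rintro φ ψ ⟨f, hf, hfR, rfl⟩ ⟨g, hg, hgR, rfl⟩
        have hET : f + g ∈ ET := ET.add_mem hf hg
        refine ⟨f + g, hET, add_mem hfR hgR, ebar _ _ fun t => ?_⟩
        show Submodule.Quotient.mk (res (f + g) hET t)
          = Submodule.Quotient.mk (res f hf t + res g hg t)
        exact mk_eq _ _ (by
          rw [res_apply (f + g) hET t, Submodule.coe_add, res_apply f hf t,
            res_apply g hg t]; rfl)
      zero_mem' := by
        have h0 : (0 : Module.End F V) ∈ ET := ET.zero_mem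
        refine ⟨0, h0, zero_mem R, ebar _ _ fun t => ?_⟩
        show Submodule.Quotient.mk (res 0 h0 t)
          = Submodule.Quotient.mk (0 : T)
        exact mk_eq _ _ (by rw [res_apply 0 h0 t]; simp)
      algebraMap_mem' := by
        intro c
        obtain ⟨lam, rfl⟩ := Ideal.Quotient.mk_surjective c
        have hmem : algebraMap O F lam • (1 : Module.End F V) ∈ ET := fun t ht => by
          rw [LinearMap.smul_apply, Module.End.one_apply, algebraMap_smul]
          exact T.smul_mem lam ht
        refine ⟨_, hmem, R.smul_mem (one_mem R) _, ebar _ _ fun t => ?_⟩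
        have : (algebraMap (O ⧸ m)
              (Module.End (O ⧸ m) (T ⧸ (m • ⊤ : Submodule O T))) (Ideal.Quotient.mk m lam))
            (Submodule.Quotient.mk t) = Submodule.Quotient.mk (lam • t) := by
          rw [Module.algebraMap_end_apply, Module.Quotient.mk_smul_mk]
        rw [this]
        show Submodule.Quotient.mk (res (algebraMap O F lam • 1) hmem t)
          = Submodule.Quotient.mk (lam • t)
        exact mk_eq _ _ (by
          rw [res_apply (algebraMap O F lam • 1) hmem t, LinearMap.smul_apply,
            Module.End.one_apply, algebraMap_smul, SetLike.val_smul]) }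
  have memRbar : ∀ {φ}, φ ∈ Rbar ↔
      ∃ f : Module.End F V, ∃ hf : f ∈ ET, f ∈ R ∧ red f hf = φ := Iff.rfl
  -- stability under conjugation
  have hρT : ∀ (σ : G), ∀ t ∈ T, ρ σ t ∈ T := by
    intro σ t ht
    have h1 := Submodule.mem_map_of_mem (f := (ρ σ).restrictScalars O) ht
    rwa [hstab σ] at h1
  have hconj : ∀ σ : G, ∀ φ ∈ Rbar, ρk σ * φ * ρk σ⁻¹ ∈ Rbar := by
    rintro σ φ ⟨f, hf, hfR, rfl⟩
    have hfT' : ρ σ * f * ρ σ⁻¹ ∈ ET := fun t ht => by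
      rw [Module.End.mul_apply, Module.End.mul_apply]
      exact hρT σ _ (hf _ (hρT σ⁻¹ t ht))
    refine ⟨_, hfT', hR σ f hfR, ebar _ _ fun t => ?_⟩
    have ht1 : ρ σ⁻¹ (t : V) ∈ T := hρT σ⁻¹ _ t.2
    have ht2 : f (ρ σ⁻¹ (t : V)) ∈ T := hf _ ht1
    have e2 : res f hf ⟨ρ σ⁻¹ (t : V), ht1⟩ = ⟨f (ρ σ⁻¹ (t : V)), ht2⟩ :=
      Subtype.ext (by rw [res_apply f hf ⟨ρ σ⁻¹ (t : V), ht1⟩])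
    calc red (ρ σ * f * ρ σ⁻¹) hfT' (Submodule.Quotient.mk t)
        = Submodule.Quotient.mk (res (ρ σ * f * ρ σ⁻¹) hfT' t) := rfl
      _ = Submodule.Quotient.mk
            (⟨ρ σ ((⟨f (ρ σ⁻¹ (t : V)), ht2⟩ : T) : V), hρT σ _ ht2⟩ : T) :=
          mk_eq _ _ (by rw [res_apply (ρ σ * f * ρ σ⁻¹) hfT' t]; rfl)
      _ = ρk σ (Submodule.Quotient.mk (⟨f (ρ σ⁻¹ (t : V)), ht2⟩ : T)) :=
          (hcompat σ _).symm
      _ = ρk σ (red f hf (Submodule.Quotient.mk (⟨ρ σ⁻¹ (t : V), ht1⟩ : T))) := by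
          have : red f hf (Submodule.Quotient.mk (⟨ρ σ⁻¹ (t : V), ht1⟩ : T))
              = Submodule.Quotient.mk (⟨f (ρ σ⁻¹ (t : V)), ht2⟩ : T) := by
            show Submodule.Quotient.mk (res f hf ⟨ρ σ⁻¹ (t : V), ht1⟩) = _
            rw [e2]
          rw [this]
      _ = ρk σ (red f hf (ρk σ⁻¹ (Submodule.Quotient.mk t))) := by
          rw [hcompat σ⁻¹ t]
      _ = (ρk σ * red f hf * ρk σ⁻¹) (Submodule.Quotient.mk t) := rfl
    -- Noetherian setup
  haveI : Module.Finite O T := Module.Finite.iff_fg.mpr hfg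
  haveI : NoZeroSMulDivisors O T := by
    refine ⟨fun {c} {x} hcx => ?_⟩
    by_cases hc : c = 0
    · exact Or.inl hc
    · right
      apply Subtype.ext
      have hcoe : c • (x : V) = 0 := by
        have := congrArg (Subtype.val) hcx
        simpa using this
      rw [← algebraMap_smul F c (x : V)] at hcoe
      rcases smul_eq_zero.mp hcoe with h1 | h2
      · exact absurd ((map_eq_zero_iff _ (IsFractionRing.injective O F)).mp h1) hc
      · simpa using h2
  haveI : Module.Free O T := Module.free_of_finite_type_torsion_free'
  haveI : Module.Finite O (T →ₗ[O] T) := Module.Finite.linearMap O O T T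
  haveI : IsNoetherian O (T →ₗ[O] T) := isNoetherian_of_isNoetherianRing_of_finite O _
  let Φ : ET →ₗ[O] (T →ₗ[O] T) :=
    { toFun := fun f => res f.1 f.2
      map_add' := fun f g => rfl
      map_smul' := fun c f => rfl }
  have hΦinj : Function.Injective Φ := by
    intro f g hfg2
    apply Subtype.ext
    apply LinearMap.ext
    intro v
    have hT2 : ∀ w ∈ T, (f : Module.End F V) w = (g : Module.End F V) w := fun w hw =>
      congrArg (Subtype.val) (DFunLike.congr_fun hfg2 (⟨w, hw⟩ : T))
    have key : ∀ w ∈ Submodule.span F (T : Set V),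
        (f : Module.End F V) w = (g : Module.End F V) w := by
      intro w hw
      induction hw using Submodule.span_induction with
      | mem x hx => exact hT2 x hx
      | zero => simp
      | add x y _ _ hx hy => rw [map_add, map_add, hx, hy]
      | smul c x _ ih => rw [map_smul, map_smul, ih]
    exact key v (hspan ▸ Submodule.mem_top)
  haveI : IsNoetherian O ET := isNoetherian_of_injective Φ hΦinj
  -- clearing denominators for endomorphisms
  have hclear : ∀ f : Module.End F V, ∃ c : O, c ≠ 0 ∧ c • f ∈ ET := by
    intro f
    obtain ⟨s, hs⟩ := hfg
    choose cf hcf0 hcfT using fun x : {x // x ∈ s} => aux_clear_denom T hspan (f x)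
    refine ⟨∏ x ∈ s.attach, cf x, Finset.prod_ne_zero_iff.mpr fun x _ => hcf0 x, ?_⟩
    intro t ht
    rw [LinearMap.smul_apply]
    have ht' : t ∈ Submodule.span O (s : Set V) := by rw [hs]; exact ht
    clear ht
    induction ht' using Submodule.span_induction with
    | mem x hx =>
        have hxs : (⟨x, hx⟩ : {x // x ∈ s}) ∈ s.attach := Finset.mem_attach _ _
        rw [← Finset.prod_erase_mul _ _ hxs, mul_smul]
        exact T.smul_mem _ (hcfT ⟨x, hx⟩)
    | zero => simp
    | add x y _ _ ihx ihy =>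
        rw [map_add, smul_add]
        exact T.add_mem ihx ihy
    | smul a x _ ih =>
        rw [LinearMap.map_smul_of_tower, smul_comm]
        exact T.smul_mem a ih
  -- division by the uniformizer
  have div_pi : ∀ f : Module.End F V, (∀ t ∈ T, f t ∈ (m • T : Submodule O V)) →
      ∃ q : Module.End F V, q ∈ ET ∧ q = (algebraMap O F π)⁻¹ • f ∧ f = π • q := by
    intro f hf
    refine ⟨(algebraMap O F π)⁻¹ • f, ?_, rfl, ?_⟩
    · intro t ht
      obtain ⟨t', ht', hteq⟩ := mem_mT' _ (hf t ht)
      rw [LinearMap.smul_apply]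
      have hft : f t = algebraMap O F π • t' := by rw [← hteq, algebraMap_smul]
      rw [hft, smul_smul, inv_mul_cancel₀ hπF, one_smul]
      exact ht'
    · rw [← algebraMap_smul F π ((algebraMap O F π)⁻¹ • f), smul_smul,
        mul_inv_cancel₀ hπF, one_smul]
  have hjac : m ≤ (⊥ : Ideal O).jacobson := by
    rw [IsLocalRing.jacobson_eq_maximalIdeal ⊥ bot_ne_top]
  have hETfg : ET.FG := (Submodule.fg_top ET).mp (IsNoetherian.noetherian ⊤)
  let RS : Submodule O (Module.End F V) := (Subalgebra.toSubmodule R).restrictScalars O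
  have memRS : ∀ {f : Module.End F V}, f ∈ RS ↔ f ∈ R := Iff.rfl
  rcases h Rbar hconj with hbot | htop
  · -- the reduction consists of scalars: R = ⊥
    left
    let RT : Submodule O (Module.End F V) := RS ⊓ ET
    have hRTle : RT ≤ ET := inf_le_right
    have hRTfg : RT.FG := by
      have h1 : Submodule.map ET.subtype (Submodule.comap ET.subtype RT) = RT := by
        rw [Submodule.map_comap_eq, Submodule.range_subtype]
        exact inf_eq_right.mpr hRTle
      rw [← h1]
      exact (IsNoetherian.noetherian _).map _
    have hNN : RT ≤ Submodule.span O {(1 : Module.End F V)} ⊔ m • RT := by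
      intro f hf
      obtain ⟨hfR, hfET⟩ := Submodule.mem_inf.mp hf
      have hmem2 : red f hfET ∈ Rbar := ⟨f, hfET, hfR, rfl⟩
      rw [hbot, Algebra.mem_bot] at hmem2
      obtain ⟨c, hc⟩ := hmem2
      obtain ⟨lam, rfl⟩ := Ideal.Quotient.mk_surjective c
      have hdiff : ∀ t ∈ T,
          (f - algebraMap O F lam • 1) t ∈ (m • T : Submodule O V) := by
        intro t ht
        have e := DFunLike.congr_fun hc (Submodule.Quotient.mk (⟨t, ht⟩ : T))
        have e2 : (Submodule.Quotient.mk (lam • (⟨t, ht⟩ : T)) : T ⧸ (m • ⊤ : Submodule O T))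
            = Submodule.Quotient.mk (res f hfET ⟨t, ht⟩) :=
          calc (Submodule.Quotient.mk (lam • (⟨t, ht⟩ : T)) : T ⧸ (m • ⊤ : Submodule O T))
              = algebraMap (O ⧸ m) (Module.End (O ⧸ m) (T ⧸ (m • ⊤ : Submodule O T)))
                  (Ideal.Quotient.mk m lam) (Submodule.Quotient.mk (⟨t, ht⟩ : T)) := by
                rw [Module.algebraMap_end_apply, Module.Quotient.mk_smul_mk]
            _ = red f hfET (Submodule.Quotient.mk (⟨t, ht⟩ : T)) := e
            _ = Submodule.Quotient.mk (res f hfET ⟨t, ht⟩) := rfl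
        rw [Submodule.Quotient.eq] at e2
        have e3 := (mem_mT _).mp e2
        rw [LinearMap.sub_apply, LinearMap.smul_apply, Module.End.one_apply, algebraMap_smul]
        have e4 : ((lam • (⟨t, ht⟩ : T) - res f hfET ⟨t, ht⟩ : T) : V)
            = lam • t - f t := by
          rw [Submodule.coe_sub, SetLike.val_smul, res_apply f hfET ⟨t, ht⟩]
        rw [e4] at e3
        have e5 := (m • T : Submodule O V).neg_mem e3
        rwa [neg_sub] at e5
      obtain ⟨q, hqET, hqdef, hq⟩ := div_pi _ hdiff
      have hqR : q ∈ R := by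
        rw [hqdef]
        exact R.smul_mem (sub_mem hfR (R.smul_mem (one_mem R) _)) _
      refine Submodule.mem_sup.mpr ⟨algebraMap O F lam • 1, ?_, π • q,
        Submodule.smul_mem_smul hπmem (Submodule.mem_inf.mpr ⟨hqR, hqET⟩), ?_⟩
      · rw [algebraMap_smul]
        exact Submodule.smul_mem _ lam (Submodule.mem_span_singleton_self 1)
      · rw [← hq]
        abel
    have hle1 : RT ≤ Submodule.span O {(1 : Module.End F V)} :=
      Submodule.le_of_le_smul_of_le_jacobson_bot hRTfg hjac hNN
    rw [eq_bot_iff]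
    intro f hfR
    obtain ⟨c, hc0, hcf⟩ := hclear f
    have hcF : algebraMap O F c ≠ 0 :=
      (map_ne_zero_iff _ (IsFractionRing.injective O F)).mpr hc0
    have hcfR : c • f ∈ R := by
      rw [← algebraMap_smul F c f]
      exact R.smul_mem hfR _
    have hmem3 : c • f ∈ RT := Submodule.mem_inf.mpr ⟨hcfR, hcf⟩
    have hmem4 := hle1 hmem3
    rw [Submodule.mem_span_singleton] at hmem4
    obtain ⟨a, ha⟩ := hmem4
    rw [Algebra.mem_bot]
    refine ⟨(algebraMap O F c)⁻¹ * algebraMap O F a, ?_⟩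
    rw [Algebra.algebraMap_eq_smul_one]
    rw [mul_smul, algebraMap_smul, ha, ← algebraMap_smul F c f, smul_smul,
      inv_mul_cancel₀ hcF, one_smul]
  · -- the reduction is everything: R = ⊤
    right
    have hNN : ET ≤ RS ⊔ m • ET := by
      intro f hfET
      have hmem2 : red f hfET ∈ Rbar := by rw [htop]; trivial
      obtain ⟨g, hgET, hgR, hgeq⟩ := hmem2
      have hdiff : ∀ t ∈ T, (f - g) t ∈ (m • T : Submodule O V) := by
        intro t ht
        have e := DFunLike.congr_fun hgeq (Submodule.Quotient.mk (⟨t, ht⟩ : T))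
        have e2 : (Submodule.Quotient.mk (res g hgET ⟨t, ht⟩) : T ⧸ (m • ⊤ : Submodule O T))
            = Submodule.Quotient.mk (res f hfET ⟨t, ht⟩) := e
        rw [Submodule.Quotient.eq] at e2
        have e3 := (mem_mT _).mp e2
        rw [LinearMap.sub_apply]
        have e4 : ((res g hgET ⟨t, ht⟩ - res f hfET ⟨t, ht⟩ : T) : V) = g t - f t := by
          rw [Submodule.coe_sub, res_apply g hgET ⟨t, ht⟩, res_apply f hfET ⟨t, ht⟩]
        rw [e4] at e3
        have e5 := (m • T : Submodule O V).neg_mem e3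
        rwa [neg_sub] at e5
      obtain ⟨q, hqET, hqdef, hq⟩ := div_pi _ hdiff
      refine Submodule.mem_sup.mpr ⟨g, hgR, π • q,
        Submodule.smul_mem_smul hπmem hqET, ?_⟩
      rw [← hq]
      abel
    have hle1 : ET ≤ RS := Submodule.le_of_le_smul_of_le_jacobson_bot hETfg hjac hNN
    rw [eq_top_iff]
    rintro f -
    obtain ⟨c, hc0, hcf⟩ := hclear f
    have hcF : algebraMap O F c ≠ 0 :=
      (map_ne_zero_iff _ (IsFractionRing.injective O F)).mpr hc0
    have hmemR : c • f ∈ R := hle1 hcf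
    have hrw : f = (algebraMap O F c)⁻¹ • (c • f) := by
      rw [← algebraMap_smul F c f, smul_smul, inv_mul_cancel₀ hcF, one_smul]
    rw [hrw]
    exact R.smul_mem hmemR _
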